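/- For every real number α > 1, every α-balanced digraph has chromatic number at most ⌈α⌉ + 1. -/

import Mathlib

/-- A set of `k`-ary edges forms a (k-uniform) directed hypergraph if
no edge has two equal coordinates. -/
def IsHypergraph {V : Type} {k : ℕ} (E : Set (Fin k → V)) : Prop :=
  ∀ e ∈ E, Function.Injective e

/-- The hypergraph `(V, E)` admits a proper coloring with `m` colors:
on each edge, not all vertices receive the same color.  The chromatic number
is at most `m` iff this holds, and is greater than `m` iff it fails. -/
def Colorable {V : Type} {k : ℕ} (E : Set (Fin k → V)) (m : ℕ) : Prop :=
  ∃ c : V → Fin m, ∀ e ∈ E, ∃ i j : Fin k, c (e i) ≠ c (e j)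

/-- A digraph `(V, E)` is `α`-balanced if every cycle of positive length
(each of whose edges is traversed forward or backward, as recorded by the
direction function `d`) which has `m` forward edges has strictly fewer than
`α * m` backward edges. -/
def IsBalanced {V : Type} (E : Set (Fin 2 → V)) (α : ℝ) : Prop :=
  ∀ (n : ℕ) (v : Fin (n+1) → V) (e : Fin n → (Fin 2 → V)) (d : Fin n → Bool),
    0 < n →
    v (Fin.last n) = v 0 →
    (∀ i : Fin n, e i ∈ E) →
    (∀ i : Fin n, if d i = true then (e i 0 = v i.castSucc ∧ e i 1 = v i.succ)
          else (e i 0 = v i.succ ∧ e i 1 = v i.castSucc)) →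
    ((Finset.univ.filter (fun i : Fin n => d i = false)).card : ℝ) <
      α * ((Finset.univ.filter (fun i : Fin n => d i = true)).card : ℝ)

namespace BalancedAux

variable {V : Type}

inductive Walk (E : Set (Fin 2 → V)) : V → V → Type where
  | nil (u : V) : Walk E u u
  | cons {u x w : V} (e : Fin 2 → V) (d : Bool) (he : e ∈ E)
      (hd : if d then e 0 = u ∧ e 1 = x else e 0 = x ∧ e 1 = u)
      (W : Walk E x w) : Walk E u w

namespace Walk

variable {E : Set (Fin 2 → V)}

def length {u w : V} : Walk E u w → ℕ
  | .nil _ => 0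
  | .cons _ _ _ _ W => W.length + 1

def value (α : ℝ) {u w : V} : Walk E u w → ℝ
  | .nil _ => 0
  | .cons _ d _ _ W => (if d then -α else 1) + W.value α

def verts {u w : V} : Walk E u w → ℕ → V
  | .nil _, _ => u
  | .cons _ _ _ _ _, 0 => u
  | .cons _ _ _ _ W, k+1 => W.verts k

def edges {u w : V} : Walk E u w → ℕ → (Fin 2 → V)
  | .nil _, _ => fun _ => u
  | .cons e _ _ _ _, 0 => e
  | .cons _ _ _ _ W, k+1 => W.edges k

def dirs {u w : V} : Walk E u w → ℕ → Bool
  | .nil _, _ => true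
  | .cons _ d _ _ _, 0 => d
  | .cons _ _ _ _ W, k+1 => W.dirs k

@[simp] lemma verts_zero {u w : V} (W : Walk E u w) : W.verts 0 = u := by
  cases W <;> rfl

lemma verts_length {u w : V} (W : Walk E u w) : W.verts W.length = w := by
  induction W with
  | nil => rfl
  | cons e d he hd W ih => exact ih

lemma edges_mem {u w : V} (W : Walk E u w) {k : ℕ} (hk : k < W.length) :
    W.edges k ∈ E := by
  induction W generalizing k with
  | nil => simp [length] at hk
  | cons e d he hd W ih =>
    cases k with
    | zero => exact he
    | succ k => exact ih (Nat.lt_of_succ_lt_succ hk)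

lemma step {u w : V} (W : Walk E u w) {k : ℕ} (hk : k < W.length) :
    if W.dirs k then W.edges k 0 = W.verts k ∧ W.edges k 1 = W.verts (k+1)
    else W.edges k 0 = W.verts (k+1) ∧ W.edges k 1 = W.verts k := by
  induction W generalizing k with
  | nil => simp [length] at hk
  | cons e d he hd W ih =>
    cases k with
    | zero =>
      simpa [dirs, edges, verts, verts_zero] using hd
    | succ k => exact ih (Nat.lt_of_succ_lt_succ hk)

lemma value_eq (α : ℝ) {u w : V} (W : Walk E u w) :
    W.value α =
      ((Finset.univ.filter (fun i : Fin W.length => W.dirs i.val = false)).card : ℝ)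
        - α * ((Finset.univ.filter (fun i : Fin W.length => W.dirs i.val = true)).card : ℝ) := by
  induction W with
  | nil =>
    simp only [value]
    rw [Finset.card_eq_zero.mpr (Finset.eq_empty_of_forall_notMem fun x _ => x.elim0),
      Finset.card_eq_zero.mpr (Finset.eq_empty_of_forall_notMem fun x _ => x.elim0)]
    simp
  | cons e d he hd W ih =>
    have hcard : ∀ c : Bool,
        ((Finset.univ.filter
            (fun i : Fin (W.length + 1) => (Walk.cons e d he hd W).dirs i.val = c)).card : ℝ)
          = (if d = c then 1 else 0)
            + ((Finset.univ.filter (fun i : Fin W.length => W.dirs i.val = c)).card : ℝ) := by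
      intro c
      rw [Finset.card_filter, Finset.card_filter]
      push_cast
      rw [Fin.sum_univ_succ]
      simp [dirs, Fin.val_succ]
    show (if d then -α else 1) + W.value α =
      ((Finset.univ.filter
          (fun i : Fin (W.length + 1) => (Walk.cons e d he hd W).dirs i.val = false)).card : ℝ)
        - α * ((Finset.univ.filter
          (fun i : Fin (W.length + 1) => (Walk.cons e d he hd W).dirs i.val = true)).card : ℝ)
    rw [hcard, hcard, ih]
    cases d <;> simp <;> ring

lemma value_closed_neg {α : ℝ} (hbal : IsBalanced E α) {u : V}
    (W : Walk E u u) (hlen : 0 < W.length) : W.value α < 0 := by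
  have h := hbal W.length (fun i => W.verts i.val) (fun i => W.edges i.val)
    (fun i => W.dirs i.val) hlen
    (by simp [Fin.val_last, verts_length, verts_zero])
    (fun i => W.edges_mem i.isLt)
    (fun i => by
      have := W.step i.isLt
      simpa [Fin.coe_castSucc, Fin.val_succ] using this)
  rw [value_eq]
  linarith

def append {u v w : V} : Walk E u v → Walk E v w → Walk E u w
  | .nil _, W2 => W2
  | .cons e d he hd W, W2 => .cons e d he hd (W.append W2)

@[simp] lemma length_append {u v w : V} (W1 : Walk E u v) (W2 : Walk E v w) :
    (W1.append W2).length = W1.length + W2.length := by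
  induction W1 with
  | nil => simp [append, length]
  | cons e d he hd W ih => simp [append, length, ih]; omega

@[simp] lemma value_append (α : ℝ) {u v w : V} (W1 : Walk E u v) (W2 : Walk E v w) :
    (W1.append W2).value α = W1.value α + W2.value α := by
  induction W1 with
  | nil => simp [append, value]
  | cons e d he hd W ih => simp [append, value, ih]; ring

def take {u w : V} : (W : Walk E u w) → (k : ℕ) → Walk E u (W.verts k)
  | .nil _, _ => .nil u
  | .cons _ _ _ _ _, 0 => .nil u
  | .cons e d he hd W, k+1 => .cons e d he hd (W.take k)

def drop {u w : V} : (W : Walk E u w) → (k : ℕ) → Walk E (W.verts k) w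
  | .nil _, _ => .nil u
  | .cons e d he hd W, 0 => .cons e d he hd W
  | .cons _ _ _ _ W, k+1 => W.drop k

lemma length_take {u w : V} (W : Walk E u w) (k : ℕ) :
    (W.take k).length = min k W.length := by
  induction W generalizing k with
  | nil => simp [take, length]
  | cons e d he hd W ih =>
    cases k with
    | zero => simp [take, length]
    | succ k =>
      show (W.take k).length + 1 = min (k+1) (W.length+1)
      rw [ih]; omega

lemma length_drop {u w : V} (W : Walk E u w) (k : ℕ) :
    (W.drop k).length = W.length - k := by
  induction W generalizing k with
  | nil => simp [drop, length]
  | cons e d he hd W ih =>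
    cases k with
    | zero => simp [drop, length]
    | succ k => simp [drop, length, ih]; exact ih k

lemma verts_drop {u w : V} (W : Walk E u w) (k m : ℕ) :
    (W.drop k).verts m = W.verts (k + m) := by
  induction W generalizing k with
  | nil => simp [drop, verts]
  | cons e d he hd W ih =>
    cases k with
    | zero => simp [drop]; rfl
    | succ k =>
      rw [show k + 1 + m = (k + m) + 1 from by omega]
      exact ih k

lemma value_take_add_drop (α : ℝ) {u w : V} (W : Walk E u w) (k : ℕ) :
    (W.take k).value α + (W.drop k).value α = W.value α := by
  induction W generalizing k with
  | nil => simp [take, drop, value]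
  | cons e d he hd W ih =>
    cases k with
    | zero => simp [take, drop, value]
    | succ k =>
      show ((if d then -α else 1) + (W.take k).value α) + (W.drop k).value α = _
      rw [add_assoc, ih]
      rfl

lemma value_cast_left (α : ℝ) {a b w : V} (h : a = b) (W : Walk E a w) :
    (h ▸ W : Walk E b w).value α = W.value α := by subst h; rfl

lemma length_cast_left {a b w : V} (h : a = b) (W : Walk E a w) :
    (h ▸ W : Walk E b w).length = W.length := by subst h; rfl

lemma value_cast_right (α : ℝ) {a b w : V} (h : a = b) (W : Walk E w a) :
    (h ▸ W : Walk E w b).value α = W.value α := by subst h; rfl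

lemma length_cast_right {a b w : V} (h : a = b) (W : Walk E w a) :
    (h ▸ W : Walk E w b).length = W.length := by subst h; rfl

def copy {a b a' b' : V} (W : Walk E a b) (h1 : a = a') (h2 : b = b') : Walk E a' b' :=
  h1 ▸ h2 ▸ W

@[simp] lemma value_copy (α : ℝ) {a b a' b' : V} (W : Walk E a b) (h1 : a = a') (h2 : b = b') :
    (W.copy h1 h2).value α = W.value α := by subst h1; subst h2; rfl

@[simp] lemma length_copy {a b a' b' : V} (W : Walk E a b) (h1 : a = a') (h2 : b = b') :
    (W.copy h1 h2).length = W.length := by subst h1; subst h2; rfl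

lemma exists_shorter {α : ℝ} (hbal : IsBalanced E α) {u w : V} (W : Walk E u w)
    {i j : ℕ} (hij : i < j) (hj : j ≤ W.length) (hv : W.verts i = W.verts j) :
    ∃ W' : Walk E u w, W'.length < W.length ∧ W.value α < W'.value α := by
  set D := W.drop i with hD
  have hend : D.verts (j - i) = W.verts i := by
    rw [hD, verts_drop, Nat.add_sub_cancel' (le_of_lt hij)]
    exact hv.symm
  set M := D.take (j - i) with hM
  set T := D.drop (j - i) with hT
  have hlenD : D.length = W.length - i := length_drop W i
  -- middle closed walk
  have hMclosed : (M.copy rfl hend).value α < 0 := by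
    apply value_closed_neg hbal
    rw [length_copy, hM, length_take, hlenD]
    omega
  refine ⟨(W.take i).append (T.copy hend rfl), ?_, ?_⟩
  · rw [length_append, length_copy, length_take, hT, length_drop, hlenD]
    omega
  · have h1 := value_take_add_drop α W i
    have h2 := value_take_add_drop α D (j - i)
    rw [value_append, value_copy]
    rw [← hD] at h1
    rw [← hM, ← hT] at h2
    rw [value_copy] at hMclosed
    linarith

lemma value_le_length {α : ℝ} (hα : 0 ≤ α) {u w : V} (W : Walk E u w) :
    W.value α ≤ (W.length : ℝ) := by
  rw [value_eq]
  have h1 : ((Finset.univ.filter (fun i : Fin W.length => W.dirs i.val = false)).card : ℝ)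
      ≤ (W.length : ℝ) := by
    have := Finset.card_filter_le (Finset.univ : Finset (Fin W.length))
      (fun i => W.dirs i.val = false)
    exact_mod_cast le_trans this (by simp)
  have h2 : 0 ≤ α * ((Finset.univ.filter (fun i : Fin W.length => W.dirs i.val = true)).card : ℝ) := by
    positivity
  linarith

lemma value_le_card [Fintype V] {α : ℝ} (hα : 0 ≤ α) (hbal : IsBalanced E α)
    {u w : V} (W : Walk E u w) : W.value α ≤ (Fintype.card V : ℝ) := by
  generalize hn : W.length = n
  induction n using Nat.strong_induction_on generalizing u w W with
  | _ n ih =>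
    by_cases hrep : ∃ i j, i < j ∧ j ≤ W.length ∧ W.verts i = W.verts j
    · obtain ⟨i, j, hij, hj, hv⟩ := hrep
      obtain ⟨W', hlt, hval⟩ := exists_shorter hbal W hij hj hv
      have := ih W'.length (by omega) W' rfl
      linarith
    · -- no repeated vertices: the vertex map on Fin (length+1) is injective
      have hinj : Function.Injective (fun i : Fin (W.length + 1) => W.verts i.val) := by
        intro a b hab
        by_contra hne
        rcases Nat.lt_or_ge a.val b.val with h | h
        · exact hrep ⟨a.val, b.val, h, Nat.lt_succ_iff.mp b.isLt, hab⟩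
        · have h' : b.val < a.val := by
            rcases Nat.lt_or_ge b.val a.val with h' | h'
            · exact h'
            · exact absurd (Fin.ext (Nat.le_antisymm h' h)) hne
          exact hrep ⟨b.val, a.val, h', Nat.lt_succ_iff.mp a.isLt, hab.symm⟩
      have hcard := Fintype.card_le_of_injective _ hinj
      simp only [Fintype.card_fin] at hcard
      have := value_le_length hα W
      have : (W.length : ℝ) ≤ (Fintype.card V : ℝ) := by
        exact_mod_cast Nat.le_of_succ_le hcard
      linarith [value_le_length hα W]

end Walk


theorem colorable_of_fintype {V : Type} [Fintype V] {α : ℝ} (hα : 1 < α)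
    (E : Set (Fin 2 → V)) (hbal : IsBalanced E α) : Colorable E (⌈α⌉₊ + 1) := by
  classical
  have hα0 : (0:ℝ) ≤ α := by linarith
  set k : ℕ := ⌈α⌉₊ + 1 with hk
  have hkα : (⌈α⌉₊ : ℤ) = ⌈α⌉ := by
    rw [← Int.ceil_toNat, Int.toNat_of_nonneg (Int.ceil_nonneg hα0)]
  have hkpos : (0:ℤ) < (k : ℤ) := by positivity
  set Wset : V → Set ℝ := fun v => {x | ∃ u, ∃ W : Walk E u v, W.value α = x} with hWset
  have hne : ∀ v, (Wset v).Nonempty := fun v => ⟨0, v, .nil v, rfl⟩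
  have hbdd : ∀ v, BddAbove (Wset v) := by
    intro v
    refine ⟨(Fintype.card V : ℝ), ?_⟩
    rintro x ⟨u, W, rfl⟩
    exact Walk.value_le_card hα0 hbal W
  set p : V → ℝ := fun v => sSup (Wset v) with hp
  have key : ∀ e ∈ E, p (e 1) + 1 ≤ p (e 0) ∧ p (e 0) ≤ p (e 1) + α := by
    intro e he
    constructor
    · rw [hp]
      have : p (e 1) ≤ p (e 0) - 1 := by
        apply csSup_le (hne _)
        rintro x ⟨u, W, rfl⟩
        have hmem : (W.append (Walk.cons e false he ⟨rfl, rfl⟩ (Walk.nil (e 0)))).value α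
            ∈ Wset (e 0) := ⟨u, _, rfl⟩
        have hle := le_csSup (hbdd _) hmem
        rw [Walk.value_append] at hle
        simp only [Walk.value] at hle
        norm_num at hle
        linarith
      linarith
    · apply csSup_le (hne _)
      rintro x ⟨u, W, rfl⟩
      have hmem : (W.append (Walk.cons e true he ⟨rfl, rfl⟩ (Walk.nil (e 1)))).value α
          ∈ Wset (e 1) := ⟨u, _, rfl⟩
      have hle := le_csSup (hbdd _) hmem
      rw [Walk.value_append] at hle
      simp only [Walk.value] at hle
      norm_num at hle
      linarith
  refine ⟨fun v => ⟨(⌈-p v⌉ % (k : ℤ)).toNat, ?_⟩, ?_⟩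
  · have h1 := Int.emod_nonneg ⌈-p v⌉ (by omega : (k:ℤ) ≠ 0)
    have h2 := Int.emod_lt_of_pos ⌈-p v⌉ hkpos
    omega
  · intro e he
    refine ⟨1, 0, ?_⟩
    obtain ⟨h1, h2⟩ := key e he
    set a : ℤ := ⌈-p (e 0)⌉ with ha
    set b : ℤ := ⌈-p (e 1)⌉ with hb
    have hba1 : a + 1 ≤ b := by
      have : -p (e 0) + 1 ≤ -p (e 1) := by linarith
      calc a + 1 = ⌈-p (e 0) + (1:ℤ)⌉ := by rw [Int.ceil_add_intCast]
        _ ≤ b := by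
            apply Int.ceil_le_ceil
            push_cast
            linarith
    have hba2 : b ≤ a + ⌈α⌉ := by
      apply Int.ceil_le.mpr
      push_cast
      have := Int.le_ceil (-p (e 0))
      have := Int.le_ceil α
      linarith
    intro hcontra
    have hmods : b % (k:ℤ) = a % (k:ℤ) := by
      have h1' := Int.emod_nonneg b (by omega : (k:ℤ) ≠ 0)
      have h2' := Int.emod_nonneg a (by omega : (k:ℤ) ≠ 0)
      have := congrArg (fun x : Fin k => (x.val : ℤ)) hcontra
      simp only [← ha, ← hb, Fin.val_mk, Int.toNat_of_nonneg h1', Int.toNat_of_nonneg h2'] at this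
      omega
    have hdvd : (k:ℤ) ∣ b - a := Int.ModEq.dvd (hmods.symm : a ≡ b [ZMOD (k:ℤ)])
    have hle := Int.le_of_dvd (by omega) hdvd
    omega

end BalancedAux

namespace BalancedAux

lemma fin2_ne {β : Type} (g : Fin 2 → β) (i j : Fin 2) (h : g i ≠ g j) :
    g 0 ≠ g 1 := by
  fin_cases i <;> fin_cases j <;> simp_all <;> exact fun hh => h hh.symm

theorem main {α : ℝ} (hα : 1 < α) {V : Type} (E : Set (Fin 2 → V))
    (hbal : IsBalanced E α) : Colorable E (⌈α⌉₊ + 1) := by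
  classical
  set k : ℕ := ⌈α⌉₊ + 1 with hk
  letI : TopologicalSpace (Fin k) := ⊥
  haveI : DiscreteTopology (Fin k) := ⟨rfl⟩
  set C : E → Set (V → Fin k) := fun e => {c | c (e.1 0) ≠ c (e.1 1)} with hC
  have hclosed : ∀ e : E, IsClosed (C e) := by
    intro e
    have hopen : IsOpen {c : V → Fin k | c (e.1 0) = c (e.1 1)} := by
      have hcont : Continuous fun c : V → Fin k => (c (e.1 0), c (e.1 1)) :=
        (continuous_apply _).prodMk (continuous_apply _)
      have hpre : ({c : V → Fin k | c (e.1 0) = c (e.1 1)})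
          = (fun c : V → Fin k => (c (e.1 0), c (e.1 1))) ⁻¹' {p : Fin k × Fin k | p.1 = p.2} :=
        rfl
      rw [hpre]
      exact (isOpen_discrete _).preimage hcont
    have : C e = {c : V → Fin k | c (e.1 0) = c (e.1 1)}ᶜ := rfl
    rw [this]
    exact hopen.isClosed_compl
  by_cases hcap : (⋂ e : E, C e).Nonempty
  · obtain ⟨c, hc⟩ := hcap
    exact ⟨c, fun e he => ⟨0, 1, Set.mem_iInter.mp hc ⟨e, he⟩⟩⟩
  · exfalso
    rw [Set.not_nonempty_iff_eq_empty] at hcap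
    obtain ⟨t, ht⟩ := IsCompact.elim_finite_subfamily_closed
      (isCompact_univ (X := V → Fin k)) C hclosed (by simp [hcap])
    set S : Set V := ⋃ e ∈ t, Set.range (e : E).1 with hS
    have hSfin : S.Finite := t.finite_toSet.biUnion (fun e _ => Set.finite_range _)
    letI := hSfin.fintype
    set E' : Set (Fin 2 → S) := {f | (fun i => (f i : V)) ∈ E} with hE'
    have hbal' : IsBalanced E' α := by
      intro n v' e' d' hn hcl hmem hstep
      refine hbal n (fun i => (v' i : V)) (fun i j => (e' i j : V)) d' hn ?_ ?_ ?_
      · exact congrArg Subtype.val hcl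
      · exact fun i => hmem i
      · intro i
        have h := hstep i
        by_cases hd : d' i = true
        · rw [if_pos hd] at h ⊢
          exact ⟨congrArg Subtype.val h.1, congrArg Subtype.val h.2⟩
        · rw [if_neg hd] at h ⊢
          exact ⟨congrArg Subtype.val h.1, congrArg Subtype.val h.2⟩
    have hcol := colorable_of_fintype hα E' hbal'
    obtain ⟨c', hc'⟩ := hcol
    set c : V → Fin k := fun x => if h : x ∈ S then c' ⟨x, h⟩ else ⟨0, Nat.succ_pos _⟩ with hc
    have hmem' : c ∈ Set.univ ∩ ⋂ e ∈ t, C e := by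
      refine ⟨trivial, Set.mem_iInter₂.mpr ?_⟩
      intro e het
      have hin : ∀ i : Fin 2, e.1 i ∈ S :=
        fun i => Set.mem_biUnion het (Set.mem_range_self i)
      set f : Fin 2 → S := fun i => ⟨e.1 i, hin i⟩ with hf
      have hfE : f ∈ E' := by
        show (fun i => (f i : V)) ∈ E
        have : (fun i => (f i : V)) = e.1 := rfl
        rw [this]
        exact e.2
      obtain ⟨i, j, hij⟩ := hc' f hfE
      have hne01 : c' (f 0) ≠ c' (f 1) := fin2_ne (fun i => c' (f i)) i j hij
      show c (e.1 0) ≠ c (e.1 1)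
      have h0 : c (e.1 0) = c' (f 0) := by rw [hc]; exact dif_pos (hin 0)
      have h1 : c (e.1 1) = c' (f 1) := by rw [hc]; exact dif_pos (hin 1)
      rw [h0, h1]
      exact hne01
    rw [ht] at hmem'
    exact hmem'

end BalancedAux

/-- For every real `α > 1`, every `α`-balanced digraph has
chromatic number at most `⌈α⌉ + 1`. -/
theorem balanced_digraph_chromatic_le
    (α : ℝ) (hα : 1 < α) {V : Type} (E : Set (Fin 2 → V))
    (hE : IsHypergraph E) (hbal : IsBalanced E α) :
    Colorable E (⌈α⌉₊ + 1) :=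
  BalancedAux.main hα E hbal
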